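/- arXiv:2509.10521 — 3 statements merged into one kernel-verified Lean document; each statement's English description precedes it below -/
import Mathlib

section
/- Let E be a finite-dimensional real inner product space (e.g. EuclideanSpace ℝ (Fin n)), let A : E → ℝ be convex and differentiable, and define its Bregman divergence D_A(x, y) = A(x) − A(y) − ⟪∇A(y), x − y⟫. Let η₁, …, η_K ∈ E and weights w₁, …, w_K ≥ 0 with W = ∑ₖ wₖ > 0. If η⋆ ∈ E satisfies the moment-matching condition ∇A(η⋆) = (1/W) ∑ₖ wₖ • ∇A(ηₖ), then η⋆ globally minimizes the weighted Bregman objective: for every η ∈ E, ∑ₖ wₖ D_A(η⋆, ηₖ) ≤ ∑ₖ wₖ D_A(η, ηₖ). -/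
/-!
The weighted objective differs from its value at `η⋆` by a single Bregman divergence:
`∑ₖ wₖ D_A(η, ηₖ) = ∑ₖ wₖ D_A(η⋆, ηₖ) + W · D_A(η, η⋆)` as soon as `∑ₖ wₖ ∇A(ηₖ) = W ∇A(η⋆)`,
because `D_A(x, z) - D_A(y, z)` is affine in `∇A(z)`. Convexity makes `D_A(η, η⋆) ≥ 0`.
-/

open RealInnerProductSpace

noncomputable def bregman {E : Type*} [NormedAddCommGroup E] [InnerProductSpace ℝ E] [CompleteSpace E]
    (A : E → ℝ) (x y : E) : ℝ :=
  A x - A y - ⟪gradient A y, x - y⟫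

theorem ConvexOn.add_fderiv_sub_le {E : Type*} [NormedAddCommGroup E] [NormedSpace ℝ E]
    {s : Set E} {f : E → ℝ} (hf : ConvexOn ℝ s f) {x y : E} (hx : x ∈ s) (hy : y ∈ s)
    (hfx : DifferentiableAt ℝ f x) :
    f x + fderiv ℝ f x (y - x) ≤ f y := by
  set l : ℝ →ᵃ[ℝ] E := AffineMap.lineMap x y
  have hl0 : l 0 = x := AffineMap.lineMap_apply_zero x y
  have hl1 : l 1 = y := AffineMap.lineMap_apply_one x y
  have hline : ConvexOn ℝ (l ⁻¹' s) (f ∘ l) := hf.comp_affineMap l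
  have hderiv : HasDerivAt (f ∘ l) (fderiv ℝ f x (y - x)) 0 := by
    have hfx' : HasFDerivAt f (fderiv ℝ f x) (l 0) := hl0 ▸ hfx.hasFDerivAt
    exact hfx'.comp_hasDerivAt 0 AffineMap.hasDerivAt_lineMap
  have h0 : (0 : ℝ) ∈ l ⁻¹' s := by rwa [Set.mem_preimage, hl0]
  have h1 : (1 : ℝ) ∈ l ⁻¹' s := by rwa [Set.mem_preimage, hl1]
  have hslope := hline.le_slope_of_hasDerivAt h0 h1 zero_lt_one hderiv
  simp only [slope_def_field, Function.comp_apply, hl0, hl1, sub_zero, div_one] at hslope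
  linarith

section Bregman

variable {E : Type*} [NormedAddCommGroup E] [InnerProductSpace ℝ E] [CompleteSpace E]

theorem bregman_nonneg {s : Set E} {A : E → ℝ} (hA : ConvexOn ℝ s A) {x y : E} (hx : x ∈ s)
    (hy : y ∈ s) (hAy : DifferentiableAt ℝ A y) : 0 ≤ bregman A x y := by
  have := hA.add_fderiv_sub_le hy hx hAy
  rw [← inner_gradient_left] at this
  unfold bregman
  linarith

theorem bregman_sub_bregman (A : E → ℝ) (x y z : E) :
    bregman A x z - bregman A y z = A x - A y - ⟪gradient A z, x - y⟫ := by
  simp only [bregman, ← sub_sub_sub_cancel_right x y z, inner_sub_right]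
  ring

theorem sum_mul_bregman_eq_add {ι : Type*} (s : Finset ι) (A : E → ℝ) (w : ι → ℝ) (η : ι → E)
    (x y : E) (h : ∑ k ∈ s, w k • gradient A (η k) = (∑ k ∈ s, w k) • gradient A y) :
    ∑ k ∈ s, w k * bregman A x (η k) =
      ∑ k ∈ s, w k * bregman A y (η k) + (∑ k ∈ s, w k) * bregman A x y := by
  rw [← sub_eq_iff_eq_add', ← Finset.sum_sub_distrib]
  calc ∑ k ∈ s, (w k * bregman A x (η k) - w k * bregman A y (η k))
      = ∑ k ∈ s, (w k * (A x - A y) - ⟪w k • gradient A (η k), x - y⟫) := by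
        refine Finset.sum_congr rfl fun k _ => ?_
        rw [← mul_sub, bregman_sub_bregman, real_inner_smul_left]
        ring
    _ = (∑ k ∈ s, w k) * bregman A x y := by
        rw [Finset.sum_sub_distrib, ← sum_inner, h, real_inner_smul_left, ← Finset.sum_mul,
          bregman]
        ring

end Bregman

theorem moment_matching_minimizes_weighted_bregman_general
    {E : Type*} [NormedAddCommGroup E] [InnerProductSpace ℝ E] [FiniteDimensional ℝ E]
    (A : E → ℝ) (hA_convex : ConvexOn ℝ Set.univ A) (hA_diff : Differentiable ℝ A)
    (K : ℕ) (η : Fin K → E) (w : Fin K → ℝ)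
    (hW : 0 < ∑ k, w k)
    (ηstar : E)
    (hmm : gradient A ηstar = (∑ k, w k)⁻¹ • ∑ k, w k • gradient A (η k)) :
    ∀ η' : E, ∑ k, w k * bregman A ηstar (η k) ≤ ∑ k, w k * bregman A η' (η k) := by
  intro η'
  have hsum : ∑ k, w k • gradient A (η k) = (∑ k, w k) • gradient A ηstar := by
    rw [hmm, smul_inv_smul₀ hW.ne']
  rw [sum_mul_bregman_eq_add Finset.univ A w η η' ηstar hsum]
  have hgap := bregman_nonneg hA_convex (Set.mem_univ η') (Set.mem_univ ηstar) (hA_diff ηstar)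
  exact le_add_of_nonneg_right (mul_nonneg hW.le hgap)

/-- Sufficiency half of information projection by moment matching: if
`∇A(η⋆)` equals the weighted average of the `∇A(ηₖ)`, then `η⋆` globally minimizes
`η ↦ ∑ₖ wₖ D_A(η, ηₖ)`. -/
theorem moment_matching_minimizes_weighted_bregman
    {E : Type*} [NormedAddCommGroup E] [InnerProductSpace ℝ E] [FiniteDimensional ℝ E]
    (A : E → ℝ) (hA_convex : ConvexOn ℝ Set.univ A) (hA_diff : Differentiable ℝ A)
    (K : ℕ) (η : Fin K → E) (w : Fin K → ℝ) (hw : ∀ k, 0 ≤ w k)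
    (hW : 0 < ∑ k, w k)
    (ηstar : E)
    (hmm : gradient A ηstar = (∑ k, w k)⁻¹ • ∑ k, w k • gradient A (η k)) :
    ∀ η' : E, ∑ k, w k * bregman A ηstar (η k) ≤ ∑ k, w k * bregman A η' (η k) :=
  moment_matching_minimizes_weighted_bregman_general A hA_convex hA_diff K η w hW ηstar hmm
end

section
/- Let E be a finite-dimensional real inner product space, let A : E → ℝ be convex and differentiable, with Bregman divergence D_A(x, y) = A(x) − A(y) − ⟪∇A(y), x − y⟫. Let η₁, …, η_K ∈ E and weights w₁, …, w_K ≥ 0 with W = ∑ₖ wₖ > 0. If η⋆ ∈ E is a global minimizer of the function F(η) = ∑ₖ wₖ D_A(η, ηₖ) over E, then ∇A(η⋆) = (1/W) ∑ₖ wₖ • ∇A(ηₖ); i.e., every minimizer is moment-matched: its mean parameter ∇A(η⋆) equals the weighted average of the clients' mean parameters ∇A(ηₖ). -/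
open RealInnerProductSpace

/-!
At a minimizer the gradient of `η ↦ ∑ₖ wₖ D_A(η, ηₖ)` vanishes. Since `D_A(·, y)` is `A`
minus an affine function with slope `∇A(y)`, that gradient is `∑ₖ wₖ (∇A(η) - ∇A(ηₖ))`, and
solving for `∇A(η)` gives the weighted average of the `∇A(ηₖ)`.
-/

open InnerProductSpace

section Gradient

variable {E : Type*} [NormedAddCommGroup E] [InnerProductSpace ℝ E] [CompleteSpace E]
  {f g : E → ℝ} {f' g' x : E}

theorem HasGradientAt.sub (hf : HasGradientAt f f' x) (hg : HasGradientAt g g' x) :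
    HasGradientAt (fun z => f z - g z) (f' - g') x := by
  rw [hasGradientAt_iff_hasFDerivAt, map_sub]
  exact hf.hasFDerivAt.sub hg.hasFDerivAt

theorem HasGradientAt.const_mul (c : ℝ) (hf : HasGradientAt f f' x) :
    HasGradientAt (fun z => c * f z) (c • f') x := by
  rw [hasGradientAt_iff_hasFDerivAt, map_smul]
  exact hf.hasFDerivAt.const_mul c

theorem HasGradientAt.fun_sum {ι : Type*} (s : Finset ι) {f : ι → E → ℝ} {f' : ι → E}
    (hf : ∀ i ∈ s, HasGradientAt (f i) (f' i) x) :
    HasGradientAt (fun z => ∑ i ∈ s, f i z) (∑ i ∈ s, f' i) x := by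
  rw [hasGradientAt_iff_hasFDerivAt, map_sum]
  exact HasFDerivAt.fun_sum fun i hi => (hf i hi).hasFDerivAt

theorem hasGradientAt_inner_sub_const (c y x : E) :
    HasGradientAt (fun z => ⟪c, z - y⟫) c x := by
  have h : (fun z => ⟪c, z - y⟫) = fun z => toDual ℝ E c z - ⟪c, y⟫ := by
    funext z
    rw [toDual_apply_apply, inner_sub_right]
  rw [h, hasGradientAt_iff_hasFDerivAt]
  exact (toDual ℝ E c).hasFDerivAt.sub_const _

theorem IsLocalMin.hasGradientAt_eq_zero (hmin : IsLocalMin f x) (hf : HasGradientAt f f' x) :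
    f' = 0 :=
  (toDual ℝ E).map_eq_zero_iff.mp (hmin.hasFDerivAt_eq_zero hf.hasFDerivAt)

end Gradient

section Bregman

variable {E : Type*} [NormedAddCommGroup E] [InnerProductSpace ℝ E] [CompleteSpace E]
  {A : E → ℝ} {x : E}

theorem hasGradientAt_bregman_left (hA : DifferentiableAt ℝ A x) (y : E) :
    HasGradientAt (fun z => bregman A z y) (gradient A x - gradient A y) x := by
  have h := (hA.hasGradientAt.sub (hasGradientAt_const x (A y))).sub
    (hasGradientAt_inner_sub_const (gradient A y) y x)
  rwa [sub_zero] at h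

theorem hasGradientAt_sum_smul_bregman_left {ι : Type*} (s : Finset ι) (w : ι → ℝ) (η : ι → E)
    (hA : DifferentiableAt ℝ A x) :
    HasGradientAt (fun z => ∑ k ∈ s, w k * bregman A z (η k))
      (∑ k ∈ s, w k • (gradient A x - gradient A (η k))) x :=
  HasGradientAt.fun_sum s fun k _ => (hasGradientAt_bregman_left hA (η k)).const_mul (w k)

theorem gradient_eq_weighted_average_of_isLocalMin_sum_bregman {ι : Type*} (s : Finset ι)
    (w : ι → ℝ) (η : ι → E) (hA : DifferentiableAt ℝ A x) (hW : ∑ k ∈ s, w k ≠ 0)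
    (hmin : IsLocalMin (fun z => ∑ k ∈ s, w k * bregman A z (η k)) x) :
    gradient A x = (∑ k ∈ s, w k)⁻¹ • ∑ k ∈ s, w k • gradient A (η k) := by
  have hcrit := hmin.hasGradientAt_eq_zero (hasGradientAt_sum_smul_bregman_left s w η hA)
  have hbalance : (∑ k ∈ s, w k) • gradient A x = ∑ k ∈ s, w k • gradient A (η k) := by
    simpa only [smul_sub, Finset.sum_sub_distrib, ← Finset.sum_smul, sub_eq_zero] using hcrit
  rw [← hbalance, smul_smul, inv_mul_cancel₀ hW, one_smul]

end Bregman

theorem minimizer_of_weighted_bregman_is_moment_matched_general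
    {E : Type*} [NormedAddCommGroup E] [InnerProductSpace ℝ E] [FiniteDimensional ℝ E]
    (A : E → ℝ) (hA_diff : Differentiable ℝ A)
    (K : ℕ) (η : Fin K → E) (w : Fin K → ℝ)
    (hW : 0 < ∑ k, w k)
    (ηstar : E)
    (hmin : ∀ η' : E, ∑ k, w k * bregman A ηstar (η k) ≤ ∑ k, w k * bregman A η' (η k)) :
    gradient A ηstar = (∑ k, w k)⁻¹ • ∑ k, w k • gradient A (η k) :=
  gradient_eq_weighted_average_of_isLocalMin_sum_bregman Finset.univ w η (hA_diff ηstar) hW.ne'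
    (Filter.Eventually.of_forall hmin)

/-- Necessity half of information projection by moment matching: every global minimizer
of `η ↦ ∑ₖ wₖ D_A(η, ηₖ)` satisfies `∇A(η⋆) = (1/W) ∑ₖ wₖ • ∇A(ηₖ)`. -/
theorem minimizer_of_weighted_bregman_is_moment_matched
    {E : Type*} [NormedAddCommGroup E] [InnerProductSpace ℝ E] [FiniteDimensional ℝ E]
    (A : E → ℝ) (hA_convex : ConvexOn ℝ Set.univ A) (hA_diff : Differentiable ℝ A)
    (K : ℕ) (η : Fin K → E) (w : Fin K → ℝ) (hw : ∀ k, 0 ≤ w k)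
    (hW : 0 < ∑ k, w k)
    (ηstar : E)
    (hmin : ∀ η' : E, ∑ k, w k * bregman A ηstar (η k) ≤ ∑ k, w k * bregman A η' (η k)) :
    gradient A ηstar = (∑ k, w k)⁻¹ • ∑ k, w k • gradient A (η k) :=
  minimizer_of_weighted_bregman_is_moment_matched_general A hA_diff K η w hW ηstar hmin
end

section
/- Let m₁, …, m_K ∈ ℝ, v₁, …, v_K > 0, and weights w₁, …, w_K ≥ 0 with W = ∑ₖ wₖ > 0. Define the moment-matched parameters m⋆ = (1/W) ∑ₖ wₖ · mₖ and v⋆ = (1/W) ∑ₖ wₖ · (vₖ + (mₖ − m⋆)²). Then v⋆ > 0, and for all m ∈ ℝ and v > 0, ∑ₖ wₖ · klDiv (gaussianReal mₖ vₖ) (gaussianReal m⋆ v⋆) ≤ ∑ₖ wₖ · klDiv (gaussianReal mₖ vₖ) (gaussianReal m v). That is, within the two-parameter Gaussian family, the weighted sum of reverse KL divergences from the client distributions N(mₖ, vₖ) is minimized exactly at the Gaussian whose first and second moments equal the weighted averages of the clients' first and second moments. -/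
open MeasureTheory ProbabilityTheory Classical

/-- Kullback–Leibler divergence between two measures, as an extended real number:
`∫ llr μ ν dμ` when `μ ≪ ν` and the log-likelihood ratio is integrable, `⊤` otherwise. -/
noncomputable def klDiv {α : Type*} [MeasurableSpace α] (μ ν : Measure α) : EReal :=
  if μ ≪ ν ∧ Integrable (llr μ ν) μ then ((∫ x, llr μ ν x ∂μ : ℝ) : EReal) else ⊤

/-!
The log-likelihood ratio of two Gaussians is a quadratic polynomial, so the first two moments of
`N(m₁, v₁)` give `KL(N(m₁, v₁) ‖ N(m₂, v₂)) = log (v₂ / v₁) / 2 + (v₁ + (m₁ - m₂)²) / (2 v₂) - 1/2`.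
With this closed form the weighted objective satisfies the Pythagorean identity of information
projection, `∑ₖ wₖ KL(qₖ ‖ p) = ∑ₖ wₖ KL(qₖ ‖ p⋆) + W · KL(p⋆ ‖ p)`: the cross terms are weighted
sums of `mₖ - m⋆` and of `vₖ + (mₖ - m⋆)² - v⋆`, which vanish because `p⋆` matches the weighted
first and second moments. Since `KL(p⋆ ‖ p) ≥ 0` (that is, `log x ≤ x - 1`), `p⋆` is a minimizer.
-/

open Real Finset
open scoped NNReal

lemma EReal.coe_finset_sum {ι : Type*} (s : Finset ι) (f : ι → ℝ) :
    ((∑ i ∈ s, f i : ℝ) : EReal) = ∑ i ∈ s, (f i : EReal) :=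
  map_sum (⟨⟨Real.toEReal, EReal.coe_zero⟩, EReal.coe_add⟩ : ℝ →+ EReal) f s

lemma Finset.sum_mul_sub_centerMass {R ι : Type*} [Field R] (t : Finset ι) (w z : ι → R)
    (hw : ∑ i ∈ t, w i ≠ 0) : ∑ i ∈ t, w i * (z i - t.centerMass w z) = 0 := by
  simp only [mul_sub, sum_sub_distrib, ← sum_mul, centerMass, smul_eq_mul,
    mul_inv_cancel_left₀ hw, sub_self]

lemma log_gaussianPDFReal (m : ℝ) {v : ℝ≥0} (hv : v ≠ 0) (x : ℝ) :
    log (gaussianPDFReal m v x) = -log (2 * π * v) / 2 - (x - m) ^ 2 / (2 * v) := by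
  have hv' : (0 : ℝ) < v := by positivity
  rw [gaussianPDFReal, log_mul (by positivity) (exp_ne_zero _), log_inv, log_exp,
    log_sqrt (by positivity)]
  ring

lemma llr_gaussianReal (m₁ m₂ : ℝ) {v₁ v₂ : ℝ≥0} (h₁ : v₁ ≠ 0) (h₂ : v₂ ≠ 0) :
    llr (gaussianReal m₁ v₁) (gaussianReal m₂ v₂) =ᵐ[gaussianReal m₁ v₁]
      fun x ↦ log (gaussianPDFReal m₁ v₁ x) - log (gaussianPDFReal m₂ v₂ x) := by
  have hac₁ := gaussianReal_absolutelyContinuous m₁ h₁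
  have hac₂ := gaussianReal_absolutelyContinuous m₂ h₂
  have hac : gaussianReal m₁ v₁ ≪ gaussianReal m₂ v₂ :=
    hac₁.trans (gaussianReal_absolutelyContinuous' m₂ h₂)
  filter_upwards [hac (Measure.rnDeriv_eq_div hac₁ hac₂), hac₁ (rnDeriv_gaussianReal m₁ v₁),
    hac₁ (rnDeriv_gaussianReal m₂ v₂)] with x hdiv hpdf₁ hpdf₂
  rw [llr_def]
  dsimp only
  rw [hdiv, hpdf₁, hpdf₂, ENNReal.toReal_div, toReal_gaussianPDF, toReal_gaussianPDF,
    log_div (gaussianPDFReal_pos _ _ _ h₁).ne' (gaussianPDFReal_pos _ _ _ h₂).ne']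

lemma integrable_sq_sub_gaussianReal (m : ℝ) (v : ℝ≥0) (a : ℝ) :
    Integrable (fun x ↦ (x - a) ^ 2) (gaussianReal m v) :=
  ((memLp_id_gaussianReal 2).sub (memLp_const a)).integrable_sq

lemma integral_sq_sub_gaussianReal (m : ℝ) (v : ℝ≥0) (a : ℝ) :
    ∫ x, (x - a) ^ 2 ∂gaussianReal m v = v + (m - a) ^ 2 := by
  have hmap := integral_map (μ := gaussianReal m v) (φ := fun x ↦ x - a) (f := fun y ↦ y ^ 2)
    (by fun_prop) (by fun_prop)
  rw [gaussianReal_map_sub_const] at hmap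
  have hvar := variance_eq_sub (μ := gaussianReal (m - a) v) (memLp_id_gaussianReal 2)
  simp only [variance_id_gaussianReal, Pi.pow_apply, id, integral_id_gaussianReal] at hvar
  rw [← hmap]
  linarith

noncomputable def gaussianKL (m₁ v₁ m₂ v₂ : ℝ) : ℝ :=
  log (v₂ / v₁) / 2 + (v₁ + (m₁ - m₂) ^ 2) / (2 * v₂) - 1 / 2

lemma klDiv_gaussianReal (m₁ m₂ : ℝ) {v₁ v₂ : ℝ≥0} (h₁ : v₁ ≠ 0) (h₂ : v₂ ≠ 0) :
    klDiv (gaussianReal m₁ v₁) (gaussianReal m₂ v₂) = gaussianKL m₁ v₁ m₂ v₂ := by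
  have hv₁ : (0 : ℝ) < v₁ := by positivity
  have hv₂ : (0 : ℝ) < v₂ := by positivity
  have hac : gaussianReal m₁ v₁ ≪ gaussianReal m₂ v₂ :=
    (gaussianReal_absolutelyContinuous m₁ h₁).trans (gaussianReal_absolutelyContinuous' m₂ h₂)
  have hllr : llr (gaussianReal m₁ v₁) (gaussianReal m₂ v₂) =ᵐ[gaussianReal m₁ v₁]
      fun x ↦ log (v₂ / v₁) / 2 + (x - m₂) ^ 2 / (2 * v₂) - (x - m₁) ^ 2 / (2 * v₁) := by
    filter_upwards [llr_gaussianReal m₁ m₂ h₁ h₂] with x hx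
    rw [hx, log_gaussianPDFReal _ h₁, log_gaussianPDFReal _ h₂, log_div hv₂.ne' hv₁.ne',
      log_mul (by positivity) hv₁.ne', log_mul (by positivity) hv₂.ne']
    ring
  have hint₁ := (integrable_sq_sub_gaussianReal m₁ v₁ m₁).div_const (2 * (v₁ : ℝ))
  have hint₂ := (integrable_sq_sub_gaussianReal m₁ v₁ m₂).div_const (2 * (v₂ : ℝ))
  have hint₀ : Integrable (fun x ↦ log ((v₂ : ℝ) / v₁) / 2 + (x - m₂) ^ 2 / (2 * v₂))
      (gaussianReal m₁ v₁) := (integrable_const _).add hint₂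
  rw [klDiv, if_pos ⟨hac, (hint₀.sub hint₁).congr hllr.symm⟩, integral_congr_ae hllr,
    integral_sub hint₀ hint₁, integral_add (integrable_const _) hint₂, integral_const,
    integral_div, integral_div, integral_sq_sub_gaussianReal, integral_sq_sub_gaussianReal]
  simp only [probReal_univ, one_smul, sub_self]
  congr 1
  rw [gaussianKL]
  field_simp
  ring

lemma gaussianKL_nonneg (m₁ m₂ : ℝ) {v₁ v₂ : ℝ} (hv₁ : 0 < v₁) (hv₂ : 0 < v₂) :
    0 ≤ gaussianKL m₁ v₁ m₂ v₂ := by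
  have hlog := one_sub_inv_le_log_of_pos (div_pos hv₂ hv₁)
  rw [inv_div] at hlog
  have hdiv : v₁ / v₂ ≤ (v₁ + (m₁ - m₂) ^ 2) / v₂ :=
    div_le_div_of_nonneg_right (le_add_of_nonneg_right (sq_nonneg _)) hv₂.le
  rw [gaussianKL, mul_comm, ← div_div]
  linarith

lemma gaussianKL_eq_add (m v a b mstar vstar : ℝ) (hv : v ≠ 0) (hb : b ≠ 0)
    (hvstar : vstar ≠ 0) :
    gaussianKL m v a b = gaussianKL m v mstar vstar + gaussianKL mstar vstar a b
      + (v + (m - mstar) ^ 2 - vstar) * (1 / (2 * b) - 1 / (2 * vstar))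
      + (m - mstar) * (mstar - a) / b := by
  simp only [gaussianKL]
  rw [log_div hb hv, log_div hvstar hv, log_div hb hvstar]
  field_simp
  ring

theorem sum_mul_gaussianKL_eq_add {ι : Type*} (s : Finset ι) (w m v : ι → ℝ)
    (hv : ∀ i ∈ s, v i ≠ 0) {mstar vstar : ℝ} (hvstar : vstar ≠ 0)
    (hmean : ∑ i ∈ s, w i * (m i - mstar) = 0)
    (hvar : ∑ i ∈ s, w i * (v i + (m i - mstar) ^ 2 - vstar) = 0) {a b : ℝ} (hb : b ≠ 0) :
    ∑ i ∈ s, w i * gaussianKL (m i) (v i) a b =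
      ∑ i ∈ s, w i * gaussianKL (m i) (v i) mstar vstar
        + (∑ i ∈ s, w i) * gaussianKL mstar vstar a b := by
  calc _ = ∑ i ∈ s, (w i * gaussianKL (m i) (v i) mstar vstar + w i * gaussianKL mstar vstar a b
          + w i * (v i + (m i - mstar) ^ 2 - vstar) * (1 / (2 * b) - 1 / (2 * vstar))
          + w i * (m i - mstar) * ((mstar - a) / b)) :=
        sum_congr rfl fun i hi ↦ by
          rw [gaussianKL_eq_add (m i) (v i) a b mstar vstar (hv i hi) hb hvstar]; ring
    _ = _ := by simp only [sum_add_distrib, ← sum_mul, hmean, hvar]; ring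

/-- Two-parameter Gaussian instance of information projection by moment matching: the
moment-matched parameters `m⋆ = (1/W) ∑ₖ wₖ mₖ` and `v⋆ = (1/W) ∑ₖ wₖ (vₖ + (mₖ − m⋆)²)`
satisfy `v⋆ > 0` and minimize `(m, v) ↦ ∑ₖ wₖ · KL(N(mₖ, vₖ) ‖ N(m, v))` over `ℝ × (0, ∞)`. -/
theorem moment_matching_minimizes_weighted_kl_gaussian
    (K : ℕ) (m v : Fin K → ℝ) (hv : ∀ k, 0 < v k)
    (w : Fin K → ℝ) (hw : ∀ k, 0 ≤ w k) (hW : 0 < ∑ k, w k)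
    (mstar vstar : ℝ)
    (hmstar : mstar = (∑ k, w k)⁻¹ * ∑ k, w k * m k)
    (hvstar : vstar = (∑ k, w k)⁻¹ * ∑ k, w k * (v k + (m k - mstar) ^ 2)) :
    0 < vstar ∧
      ∀ (m' v' : ℝ), 0 < v' →
        ∑ k, (w k : EReal) *
            klDiv (gaussianReal (m k) (v k).toNNReal) (gaussianReal mstar vstar.toNNReal)
          ≤ ∑ k, (w k : EReal) *
              klDiv (gaussianReal (m k) (v k).toNNReal) (gaussianReal m' v'.toNNReal) := by
  -- `(∑ k, w k)⁻¹ * ∑ k, w k * z k` is `univ.centerMass w z` unfolded.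
  have hmean : ∑ k, w k * (m k - mstar) = 0 := by
    rw [hmstar]; exact univ.sum_mul_sub_centerMass w m hW.ne'
  have hvar : ∑ k, w k * (v k + (m k - mstar) ^ 2 - vstar) = 0 := by
    rw [hvstar]; exact univ.sum_mul_sub_centerMass w _ hW.ne'
  have hvstar_pos : 0 < vstar := by
    rw [hvstar]
    exact (convex_Ioi 0).centerMass_mem (fun k _ ↦ hw k) hW
      fun k _ ↦ add_pos_of_pos_of_nonneg (hv k) (sq_nonneg _)
  have hsum : ∀ a b, 0 < b →
      ∑ k, (w k : EReal) * klDiv (gaussianReal (m k) (v k).toNNReal) (gaussianReal a b.toNNReal)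
        = ((∑ k, w k * gaussianKL (m k) (v k) a b : ℝ) : EReal) := fun a b hb ↦ by
    rw [EReal.coe_finset_sum]
    refine sum_congr rfl fun k _ ↦ ?_
    rw [klDiv_gaussianReal _ _ (toNNReal_pos.mpr (hv k)).ne' (toNNReal_pos.mpr hb).ne',
      coe_toNNReal _ (hv k).le, coe_toNNReal _ hb.le, EReal.coe_mul]
  refine ⟨hvstar_pos, fun m' v' hv' ↦ ?_⟩
  rw [hsum _ _ hvstar_pos, hsum _ _ hv', EReal.coe_le_coe_iff, sum_mul_gaussianKL_eq_add univ w m v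
    (fun k _ ↦ (hv k).ne') hvstar_pos.ne' hmean hvar hv'.ne']
  exact le_add_of_nonneg_right (mul_nonneg hW.le (gaussianKL_nonneg _ _ hvstar_pos hv'))
end
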